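/- arXiv:1409.5381 — 2 statements merged into one kernel-verified Lean document; each statement's English description precedes it below -/
import Mathlib

section
/- Let E be a complex Banach space, e ∈ E a unit vector and z₀ ∈ Δ. Define f₀ : Δ → E by f₀(z) = ((1-|z₀|²)·z/(1 - conj(z₀)·z))·e. Then f₀ ∈ B₀(Δ,E), (1-|z₀|²)·‖f₀'(z₀)‖ = 1, and for every z ∈ Δ with z ≠ z₀ one has (1-|z|²)·‖f₀'(z)‖ < 1; in particular sup_{z∈Δ}(1-|z|²)‖f₀'(z)‖ = 1 and this supremum is attained only at z₀. -/
open Metric Complex Set Function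

noncomputable section

namespace BlochPaper

/-- The open unit disc `Δ = {z : |z| < 1}` in `ℂ`. -/
def disc : Set ℂ := Metric.ball 0 1

/-- A disc automorphism: on the disc, `σ` is given by a Möbius map
`z ↦ λ (z - a)/(1 - conj a · z)` with `|λ| = 1`, `|a| < 1`. -/
def IsDiscAut (σ : ℂ → ℂ) : Prop :=
  ∃ lam a : ℂ, ‖lam‖ = 1 ∧ ‖a‖ < 1 ∧
    ∀ z ∈ disc, σ z = lam * (z - a) / (1 - (starRingEnd ℂ) a * z)

/-- `g(z) → 0` as `|z| → 1` within the disc. -/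
def ZeroAtBoundary (g : ℂ → ℝ) : Prop :=
  ∀ ε > 0, ∃ r : ℝ, r < 1 ∧ ∀ z ∈ disc, r < ‖z‖ → g z < ε

/-- A complex Banach space is smooth if every norm-one vector has
a unique norming functional. -/
def Smooth (E : Type*) [NormedAddCommGroup E] [NormedSpace ℂ E] : Prop :=
  ∀ x : E, ‖x‖ = 1 → ∃! φ : E →L[ℂ] ℂ, ‖φ‖ = 1 ∧ φ x = 1

/-- A complex Banach space is strictly convex if `‖x + y‖ < 2` for distinct
norm-one vectors `x, y`. -/
def StrictlyConvexSp (E : Type*) [NormedAddCommGroup E] : Prop :=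
  ∀ x y : E, x ≠ y → ‖x‖ = 1 → ‖y‖ = 1 → ‖x + y‖ < 2

/-!
Since `f₀' = (1 - |z₀|²)/(1 - z̄₀z)² · e`, the Bloch weight `(1 - |z|²)‖f₀'(z)‖` equals
`(1 - |z|²)(1 - |z₀|²)/|1 - z̄₀z|²`. The identity
`|1 - z̄₀z|² = (1 - |z|²)(1 - |z₀|²) + |z - z₀|²` turns this into `1 - |φ(z)|²`, where
`φ(z) = (z - z₀)/(1 - z̄₀z)` is the disc automorphism vanishing at `z₀`; so the weight is at
most `1`, with equality exactly at `z₀`. Near the boundary, `|1 - z̄₀z| ≥ 1 - |z₀|` bounds the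
weight by a multiple of `1 - |z|`.
-/

open ComplexConjugate

lemma norm_one_sub_conj_mul_sq (a z : ℂ) :
    ‖1 - conj a * z‖ ^ 2 = (1 - ‖z‖ ^ 2) * (1 - ‖a‖ ^ 2) + ‖z - a‖ ^ 2 := by
  simp only [Complex.sq_norm, Complex.normSq_apply, Complex.sub_re, Complex.sub_im,
    Complex.mul_re, Complex.mul_im, Complex.one_re, Complex.one_im, Complex.conj_re,
    Complex.conj_im]
  ring

lemma one_sub_norm_le_norm_one_sub_conj_mul (a : ℂ) {z : ℂ} (hz : ‖z‖ ≤ 1) :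
    1 - ‖a‖ ≤ ‖1 - conj a * z‖ := by
  have hmul : ‖conj a * z‖ ≤ ‖a‖ := by
    rw [norm_mul, Complex.norm_conj]
    exact mul_le_of_le_one_right (norm_nonneg a) hz
  linarith [norm_one (α := ℂ) ▸ norm_sub_norm_le (1 : ℂ) (conj a * z)]

lemma one_sub_sq_mul_div_norm_one_sub_conj_mul_sq {a z : ℂ} (h : 1 - conj a * z ≠ 0) :
    (1 - ‖z‖ ^ 2) * ((1 - ‖a‖ ^ 2) / ‖1 - conj a * z‖ ^ 2) =
      1 - ‖z - a‖ ^ 2 / ‖1 - conj a * z‖ ^ 2 := by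
  have hpos : ‖1 - conj a * z‖ ^ 2 ≠ 0 := by positivity
  field_simp
  linarith [norm_one_sub_conj_mul_sq a z]

lemma one_sub_sq_mul_div_norm_one_sub_conj_mul_sq_le {a z : ℂ} (ha : ‖a‖ < 1) (hz : ‖z‖ ≤ 1) :
    (1 - ‖z‖ ^ 2) * ((1 - ‖a‖ ^ 2) / ‖1 - conj a * z‖ ^ 2) ≤ 4 / (1 - ‖a‖) * (1 - ‖z‖) := by
  have ha' : 0 < 1 - ‖a‖ := by linarith
  have hden := one_sub_norm_le_norm_one_sub_conj_mul a hz
  have hfactor : (1 - ‖a‖ ^ 2) / ‖1 - conj a * z‖ ^ 2 ≤ 2 / (1 - ‖a‖) :=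
    calc (1 - ‖a‖ ^ 2) / ‖1 - conj a * z‖ ^ 2
        ≤ (1 - ‖a‖ ^ 2) / (1 - ‖a‖) ^ 2 := by
          gcongr
          nlinarith [norm_nonneg a]
      _ = (1 + ‖a‖) / (1 - ‖a‖) := by field_simp; ring
      _ ≤ 2 / (1 - ‖a‖) := by gcongr; linarith
  have hz_sq : 1 - ‖z‖ ^ 2 ≤ 2 * (1 - ‖z‖) := by nlinarith [sq_nonneg (1 - ‖z‖)]
  have hfactor_nonneg : 0 ≤ (1 - ‖a‖ ^ 2) / ‖1 - conj a * z‖ ^ 2 :=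
    div_nonneg (by nlinarith [norm_nonneg a]) (sq_nonneg _)
  calc (1 - ‖z‖ ^ 2) * ((1 - ‖a‖ ^ 2) / ‖1 - conj a * z‖ ^ 2)
      ≤ (2 * (1 - ‖z‖)) * (2 / (1 - ‖a‖)) :=
        mul_le_mul hz_sq hfactor hfactor_nonneg (by linarith)
    _ = 4 / (1 - ‖a‖) * (1 - ‖z‖) := by ring

lemma zeroAtBoundary_of_le_mul_one_sub_norm {g : ℂ → ℝ} {C : ℝ} (hC : 0 < C)
    (hg : ∀ z ∈ disc, g z ≤ C * (1 - ‖z‖)) : ZeroAtBoundary g := by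
  intro ε hε
  refine ⟨1 - ε / C, by linarith [div_pos hε hC], fun z hz hr => ?_⟩
  calc g z ≤ C * (1 - ‖z‖) := hg z hz
    _ < C * (ε / C) := by gcongr; linarith
    _ = ε := mul_div_cancel₀ ε hC.ne'

lemma hasDerivAt_mul_div_one_sub_mul_smul {E : Type*} [NormedAddCommGroup E]
    [NormedSpace ℂ E] (K c : ℂ) (e : E) {z : ℂ} (hz : 1 - c * z ≠ 0) :
    HasDerivAt (fun w => (K * w / (1 - c * w)) • e) ((K / (1 - c * z) ^ 2) • e) z := by
  have hnum : HasDerivAt (fun w : ℂ => K * w) K z := by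
    simpa using (hasDerivAt_id z).const_mul K
  have hden : HasDerivAt (fun w : ℂ => 1 - c * w) (-c) z := by
    simpa using ((hasDerivAt_id z).const_mul c).const_sub 1
  rw [show K / (1 - c * z) ^ 2 = (K * (1 - c * z) - K * z * -c) / (1 - c * z) ^ 2 by ring]
  exact (hnum.div hden hz).smul_const e

/-- **Statement 17.** The test function `f₀(z) = ((1-|z₀|²)z/(1-conj z₀ · z))·e`
belongs to `B₀(Δ,E)`, satisfies `(1-|z₀|²)‖f₀'(z₀)‖ = 1` and
`(1-|z|²)‖f₀'(z)‖ < 1` for `z ≠ z₀`; in particular the Bloch supremum is `1`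
and is attained only at `z₀`. -/
theorem test_function_peaks (E : Type*) [NormedAddCommGroup E] [NormedSpace ℂ E]
    (e : E) (he : ‖e‖ = 1) (z₀ : ℂ) (hz₀ : z₀ ∈ disc) (f₀ : ℂ → E)
    (hf₀ : ∀ z, f₀ z = ((((1 : ℝ) - ‖z₀‖ ^ 2 : ℝ) : ℂ) * z / (1 - (starRingEnd ℂ) z₀ * z)) • e) :
    DifferentiableOn ℂ f₀ disc ∧ f₀ 0 = 0 ∧
      ZeroAtBoundary (fun z => (1 - ‖z‖ ^ 2) * ‖deriv f₀ z‖) ∧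
      (1 - ‖z₀‖ ^ 2) * ‖deriv f₀ z₀‖ = 1 ∧
      (∀ z ∈ disc, z ≠ z₀ → (1 - ‖z‖ ^ 2) * ‖deriv f₀ z‖ < 1) ∧
      IsGreatest {x : ℝ | ∃ z ∈ disc, x = (1 - ‖z‖ ^ 2) * ‖deriv f₀ z‖} 1 := by
  have hz₀' : ‖z₀‖ < 1 := mem_ball_zero_iff.mp hz₀
  have hden : ∀ z ∈ disc, 1 - conj z₀ * z ≠ 0 := fun z hz =>
    norm_pos_iff.mp <| (sub_pos.mpr hz₀').trans_le <|
      one_sub_norm_le_norm_one_sub_conj_mul z₀ (mem_ball_zero_iff.mp hz).le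
  have hderiv : ∀ z ∈ disc, HasDerivAt f₀ _ z := fun z hz =>
    funext hf₀ ▸ hasDerivAt_mul_div_one_sub_mul_smul _ _ e (hden z hz)
  have hweight : ∀ z ∈ disc, (1 - ‖z‖ ^ 2) * ‖deriv f₀ z‖ =
      (1 - ‖z‖ ^ 2) * ((1 - ‖z₀‖ ^ 2) / ‖1 - conj z₀ * z‖ ^ 2) := fun z hz => by
    rw [(hderiv z hz).deriv, norm_smul, he, mul_one, norm_div, norm_pow, Complex.norm_real,
      Real.norm_of_nonneg (by nlinarith [norm_nonneg z₀])]
  have hweight_eq_one_sub : ∀ z ∈ disc, (1 - ‖z‖ ^ 2) * ‖deriv f₀ z‖ =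
      1 - ‖z - z₀‖ ^ 2 / ‖1 - conj z₀ * z‖ ^ 2 := fun z hz => by
    rw [hweight z hz, one_sub_sq_mul_div_norm_one_sub_conj_mul_sq (hden z hz)]
  have hpeak : (1 - ‖z₀‖ ^ 2) * ‖deriv f₀ z₀‖ = 1 := by simp [hweight_eq_one_sub z₀ hz₀]
  refine ⟨fun z hz => (hderiv z hz).differentiableAt.differentiableWithinAt, by simp [hf₀],
    ?_, hpeak, fun z hz hne => ?_, ⟨⟨z₀, hz₀, hpeak.symm⟩, ?_⟩⟩
  · refine zeroAtBoundary_of_le_mul_one_sub_norm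
      (div_pos four_pos (sub_pos.mpr hz₀')) fun z hz => ?_
    rw [hweight z hz]
    exact one_sub_sq_mul_div_norm_one_sub_conj_mul_sq_le hz₀' (mem_ball_zero_iff.mp hz).le
  · rw [hweight_eq_one_sub z hz, sub_lt_self_iff]
    have hne' : z - z₀ ≠ 0 := sub_ne_zero.mpr hne
    have hden' := hden z hz
    positivity
  · rintro x ⟨z, hz, rfl⟩
    rw [hweight_eq_one_sub z hz, sub_le_self_iff]
    positivity

end BlochPaper
end
end

section
/- Let a : ℝ → ℂ and b : ℝ → ℂ be functions differentiable at 0 with |a(t)| = 1 and |b(t)| < 1 for all t, a(0) = 1 and b(0) = 0, and define φ_t(z) = a(t)·(z - b(t))/(1 - conj(b(t))·z) for z ∈ Δ. Then for every z ∈ Δ, the derivative of t ↦ φ_t(z) at t = 0 equals P(z) = conj(b'(0))·z² + a'(0)·z - b'(0), and the derivative of t ↦ φ_t'(z) (the z-derivative of φ_t) at t = 0 equals P'(z) = 2·conj(b'(0))·z + a'(0). -/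
/-! The `t`-derivatives are computed by the quotient rule at `t = 0`, where `b` vanishes and `a` is `1`.
For `φ_t'` one first uses the closed form `φ_t'(z) = a(t)(1 - |b(t)|²)/(1 - conj(b(t)) z)²`,
valid for every `t` because `|b(t)| < 1` keeps the denominator away from `0` on the disc. -/

open Metric Complex Set Function

noncomputable section

namespace BlochPaper

open ComplexConjugate

lemma one_sub_conj_mul_ne_zero {β z : ℂ} (hβ : ‖β‖ < 1) (hz : ‖z‖ ≤ 1) :
    1 - conj β * z ≠ 0 := by
  have hlt : ‖conj β * z‖ < 1 := by
    rw [norm_mul, RCLike.norm_conj]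
    calc ‖β‖ * ‖z‖ ≤ ‖β‖ * 1 := by gcongr
      _ < 1 := by rwa [mul_one]
  exact sub_ne_zero.mpr fun h => by simp [← h] at hlt

lemma hasDerivAt_moebius (c β : ℂ) {z : ℂ} (hz : 1 - conj β * z ≠ 0) :
    HasDerivAt (fun w => c * (w - β) / (1 - conj β * w))
      (c * (1 - conj β * β) / (1 - conj β * z) ^ 2) z := by
  have hnum : HasDerivAt (fun w => c * (w - β)) c z := by
    simpa using ((hasDerivAt_id z).sub_const β).const_mul c
  have hden : HasDerivAt (fun w => 1 - conj β * w) (-conj β) z := by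
    simpa using ((hasDerivAt_id z).const_mul (conj β)).const_sub 1
  refine (hnum.div hden hz).congr_deriv ?_
  field_simp
  ring

section Family

variable {a b : ℝ → ℂ} {a' b' : ℂ} {t₀ : ℝ}

lemma hasDerivAt_moebius_family (ha : HasDerivAt a a' t₀) (hb : HasDerivAt b b' t₀)
    (ha₀ : a t₀ = 1) (hb₀ : b t₀ = 0) (z : ℂ) :
    HasDerivAt (fun t => a t * (z - b t) / (1 - conj (b t) * z))
      (conj b' * z ^ 2 + a' * z - b') t₀ := by
  have hnum := ha.mul ((hasDerivAt_const t₀ z).sub hb)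
  have hden := (hb.star.mul_const z).const_sub 1
  refine (hnum.div hden (by simp [hb₀])).congr_deriv ?_
  simp only [Pi.mul_apply, Pi.sub_apply, ha₀, hb₀]
  norm_num
  ring

lemma hasDerivAt_moebius_family_deriv (ha : HasDerivAt a a' t₀) (hb : HasDerivAt b b' t₀)
    (ha₀ : a t₀ = 1) (hb₀ : b t₀ = 0) (z : ℂ) :
    HasDerivAt (fun t => a t * (1 - conj (b t) * b t) / (1 - conj (b t) * z) ^ 2)
      (2 * conj b' * z + a') t₀ := by
  have hnum := ha.mul ((hb.star.mul hb).const_sub 1)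
  have hden := ((hb.star.mul_const z).const_sub 1).pow 2
  refine (hnum.div hden (by simp [hb₀])).congr_deriv ?_
  simp only [Pi.mul_apply, Pi.pow_apply, ha₀, hb₀]
  norm_num
  ring

end Family

theorem invariant_polynomial_general (a b : ℝ → ℂ) (a' b' : ℂ)
    (ha : HasDerivAt a a' 0) (hb : HasDerivAt b b' 0)
    (hbnorm : ∀ t, ‖b t‖ < 1)
    (ha0 : a 0 = 1) (hb0 : b 0 = 0) (φ : ℝ → ℂ → ℂ)
    (hφ : ∀ t z, φ t z = a t * (z - b t) / (1 - (starRingEnd ℂ) (b t) * z)) :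
    ∀ z ∈ disc,
      HasDerivAt (fun t : ℝ => φ t z) ((starRingEnd ℂ) b' * z ^ 2 + a' * z - b') 0 ∧
      HasDerivAt (fun t : ℝ => deriv (φ t) z) (2 * (starRingEnd ℂ) b' * z + a') 0 := by
  intro z hz
  have hz₁ : ‖z‖ ≤ 1 := (mem_ball_zero_iff.mp hz).le
  have hφ' : φ = fun t w => a t * (w - b t) / (1 - conj (b t) * w) := by
    ext t w
    exact hφ t w
  have hderiv : (fun t => deriv (φ t) z)
      = fun t => a t * (1 - conj (b t) * b t) / (1 - conj (b t) * z) ^ 2 := by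
    ext t
    rw [hφ']
    exact (hasDerivAt_moebius _ _ (one_sub_conj_mul_ne_zero (hbnorm t) hz₁)).deriv
  rw [hderiv, hφ']
  exact ⟨hasDerivAt_moebius_family ha hb ha0 hb0 z,
    hasDerivAt_moebius_family_deriv ha hb ha0 hb0 z⟩

/-- **Statement 18.** For a one-parameter family of Möbius maps
`φ_t(z) = a(t)(z-b(t))/(1-conj(b(t))z)` with `a, b` differentiable at `0`,
`a(0) = 1`, `b(0) = 0`, the `t`-derivative at `0` of `φ_t(z)` is the invariant
polynomial `P(z) = conj(b'(0))z² + a'(0)z - b'(0)`, and that of `φ_t'(z)` is `P'(z)`. -/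
theorem invariant_polynomial (a b : ℝ → ℂ) (a' b' : ℂ)
    (ha : HasDerivAt a a' 0) (hb : HasDerivAt b b' 0)
    (hanorm : ∀ t, ‖a t‖ = 1) (hbnorm : ∀ t, ‖b t‖ < 1)
    (ha0 : a 0 = 1) (hb0 : b 0 = 0) (φ : ℝ → ℂ → ℂ)
    (hφ : ∀ t z, φ t z = a t * (z - b t) / (1 - (starRingEnd ℂ) (b t) * z)) :
    ∀ z ∈ disc,
      HasDerivAt (fun t : ℝ => φ t z) ((starRingEnd ℂ) b' * z ^ 2 + a' * z - b') 0 ∧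
      HasDerivAt (fun t : ℝ => deriv (φ t) z) (2 * (starRingEnd ℂ) b' * z + a') 0 :=
  invariant_polynomial_general a b a' b' ha hb hbnorm ha0 hb0 φ hφ

end BlochPaper
end
end
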